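/- Let X be a real Banach space that is midpoint locally uniformly rotund (MLUR) and let M be a complete subset of X, regarded as a metric space with the metric induced by the norm. Let x ≠ y ∈ M. The following are equivalent: (1) the pair (x, y) satisfies the local Δ-condition; (2) for every r with 0 < r < ‖x − y‖ and every ε > 0 there exists z ∈ M with ‖z − x‖ ≤ r + ε and ‖z − y‖ ≤ ‖x − y‖ − r + ε; (3) the segment [x, y] = {(1 − t)·x + t·y : t ∈ [0, 1]} is contained in M. -/

import Mathlib

open Filter

/-- The pair of distinct points of a metric space satisfies the local Δ-condition. -/
def LocalDeltaCondition {M : Type*} [MetricSpace M] (x y : M) : Prop :=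
  ∀ f : M → ℝ, LipschitzWith 1 f → ∀ θ : ℝ, 0 < θ → θ < 1 →
    f x - f y > θ * dist x y → ∀ ε : ℝ, 0 < ε →
      ∃ u v : M, 0 < dist u v ∧ dist u v < ε ∧ f u - f v > θ * dist u v

/-- `X` is midpoint locally uniformly rotund (MLUR). -/
def MLUR (X : Type*) [NormedAddCommGroup X] [NormedSpace ℝ X] : Prop :=
  ∀ (x y : ℕ → X) (z : X),
    Tendsto (fun n => ‖x n‖) atTop (nhds 1) →
    Tendsto (fun n => ‖y n‖) atTop (nhds 1) →
    Tendsto (fun n => (1 / 2 : ℝ) • (x n + y n)) atTop (nhds z) → ‖z‖ = 1 →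
    Tendsto (fun n => ‖x n - y n‖) atTop (nhds 0)

/-!
In any metric space, the local Δ-condition for `(x, y)` says exactly that, for every `ε > 0`, `x` and
`y` are joined by `ε`-chains (steps shorter than `ε`) of length arbitrarily close to `d(x, y)`.
Telescoping `f` along such a chain produces a short step of slope `> θ`. Conversely, if all
`ε`-chains are longer than `L = d(x, y) + η`, then `θ` times the `ε`-chain distance to `y`, capped
at `L`, has slope at most `θ` at scales below `ε`, is `1`-Lipschitz once `θ L < ε`, and still
separates `x` from `y` by more than `θ d(x, y)`.

A nearly geodesic chain has to step across every sphere around `x` of radius `r < d(x, y)`, which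
gives (2); the segment provides exact geodesic chains. Finally MLUR, applied to the normalised
vectors `(z - x)/(t d)` and `(y - z)/((1 - t) d)` whose convex combination is `(y - x)/d`, forces
points `z` with `‖z - x‖ ≈ t d` and `‖z - y‖ ≈ (1 - t) d` to converge to `(1 - t) x + t y`; by (2)
such points exist in `M`, so the closed set `M` contains the segment.
-/

open Topology

theorem exists_mem_Ico_of_step_lt {g : ℕ → ℝ} {n : ℕ} {r ε : ℝ}
    (hstep : ∀ i < n, g (i + 1) < g i + ε) (h0 : g 0 < r) (hn : r ≤ g n) :
    ∃ k ≤ n, g k ∈ Set.Ico r (r + ε) := by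
  classical
  have hex : ∃ k, r ≤ g k := ⟨n, hn⟩
  have hk0 : Nat.find hex ≠ 0 := fun h => h0.not_ge (h ▸ Nat.find_spec hex)
  obtain ⟨j, hj⟩ := Nat.exists_eq_add_one_of_ne_zero hk0
  have hkn : Nat.find hex ≤ n := Nat.find_min' hex hn
  have hgj : g j < r := not_le.1 (Nat.find_min hex (by omega))
  refine ⟨_, hkn, Nat.find_spec hex, ?_⟩
  have := hstep j (by omega)
  rw [← hj] at this
  linarith

section Chains

variable {α : Type*} [PseudoMetricSpace α] {ε : ℝ}

def chainLengths (ε : ℝ) (a b : α) : Set ℝ :=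
  {s | ∃ (n : ℕ) (p : ℕ → α), p 0 = a ∧ p n = b ∧ (∀ i < n, dist (p i) (p (i + 1)) < ε) ∧
    s = ∑ i ∈ Finset.range n, dist (p i) (p (i + 1))}

theorem zero_mem_chainLengths (a : α) : (0 : ℝ) ∈ chainLengths ε a a :=
  ⟨0, fun _ => a, rfl, rfl, by simp, by simp⟩

theorem nonneg_of_mem_chainLengths {a b : α} {s : ℝ} (hs : s ∈ chainLengths ε a b) : 0 ≤ s := by
  obtain ⟨n, p, -, -, -, rfl⟩ := hs
  exact Finset.sum_nonneg fun _ _ => dist_nonneg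

theorem dist_add_mem_chainLengths {a b c : α} {s : ℝ} (hab : dist a b < ε)
    (hs : s ∈ chainLengths ε b c) : dist a b + s ∈ chainLengths ε a c := by
  obtain ⟨n, p, rfl, rfl, hstep, rfl⟩ := hs
  refine ⟨n + 1, fun | 0 => a | i + 1 => p i, rfl, rfl, ?_, ?_⟩
  · rintro (_ | i) hi
    exacts [hab, hstep i (by omega)]
  · rw [Finset.sum_range_succ', add_comm]

theorem dist_add_dist_le_sum_dist (p : ℕ → α) {k n : ℕ} (hkn : k ≤ n) :
    dist (p 0) (p k) + dist (p k) (p n) ≤ ∑ i ∈ Finset.range n, dist (p i) (p (i + 1)) := by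
  rw [← Finset.sum_range_add_sum_Ico _ hkn]
  exact add_le_add (dist_le_range_sum_dist p k) (dist_le_Ico_sum_dist p hkn)

theorem exists_dist_lt_of_mem_chainLengths {x y : α} {r s : ℝ} (hr : 0 < r) (hrd : r ≤ dist x y)
    (hs : s ∈ chainLengths ε x y) : ∃ z, dist z x < r + ε ∧ dist z y ≤ s - r := by
  obtain ⟨n, p, rfl, rfl, hstep, rfl⟩ := hs
  obtain ⟨k, hkn, hrk, hkε⟩ := exists_mem_Ico_of_step_lt (ε := ε) (g := fun i => dist (p i) (p 0))
    (fun i hi => (dist_triangle (p (i + 1)) (p i) (p 0)).trans_lt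
      (by linarith [dist_comm (p i) (p (i + 1)), hstep i hi]))
    (by simpa using hr) (by rwa [dist_comm])
  refine ⟨p k, hkε, ?_⟩
  linarith [dist_add_dist_le_sum_dist p hkn, dist_comm (p 0) (p k)]

theorem exists_mem_chainLengths_le_dist {x y : α} {γ : ℝ → α} (hγ : LipschitzWith (nndist x y) γ)
    (h0 : γ 0 = x) (h1 : γ 1 = y) (hε : 0 < ε) : ∃ s ∈ chainLengths ε x y, s ≤ dist x y := by
  obtain ⟨n, hn⟩ := exists_nat_gt (dist x y / ε)
  have hn0 : (0 : ℝ) < n := (div_nonneg dist_nonneg hε.le).trans_lt hn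
  have hstep (i : ℕ) : dist (γ (i / n)) (γ ((i + 1 : ℕ) / n)) ≤ dist x y / n := by
    calc _ ≤ dist x y * dist ((i : ℝ) / n) ((i + 1 : ℕ) / n) := hγ.dist_le_mul _ _
      _ = dist x y / n := by
        rw [Real.dist_eq, Nat.cast_succ, ← sub_div, sub_add_cancel_left, abs_div, abs_neg,
          abs_one, abs_of_pos hn0, mul_one_div]
  refine ⟨_, ⟨n, fun i => γ (i / n), by simpa using h0, by simpa [hn0.ne'] using h1,
    fun i _ => (hstep i).trans_lt ?_, rfl⟩, ?_⟩
  · rwa [div_lt_iff₀ hn0, mul_comm, ← div_lt_iff₀ hε]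
  · calc _ ≤ ∑ _ ∈ Finset.range n, dist x y / n := Finset.sum_le_sum fun i _ => hstep i
      _ = dist x y := by
        rw [Finset.sum_const, Finset.card_range, nsmul_eq_mul, mul_div_cancel₀ _ hn0.ne']

/-- Capping at `L` keeps the infimum away from the junk value `sInf ∅ = 0`. -/
noncomputable def cappedChainDist (ε L : ℝ) (a b : α) : ℝ :=
  sInf (insert L (chainLengths ε a b))

variable {L : ℝ}

theorem bddBelow_insert_chainLengths (hL : 0 ≤ L) (a b : α) :
    BddBelow (insert L (chainLengths ε a b)) :=
  ⟨0, by rintro s (rfl | hs); exacts [hL, nonneg_of_mem_chainLengths hs]⟩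

theorem cappedChainDist_le (hL : 0 ≤ L) (a b : α) : cappedChainDist ε L a b ≤ L :=
  csInf_le (bddBelow_insert_chainLengths hL a b) (Set.mem_insert _ _)

theorem cappedChainDist_le_of_mem (hL : 0 ≤ L) {a b : α} {s : ℝ} (hs : s ∈ chainLengths ε a b) :
    cappedChainDist ε L a b ≤ s :=
  csInf_le (bddBelow_insert_chainLengths hL a b) (Set.mem_insert_of_mem _ hs)

theorem cappedChainDist_nonneg (hL : 0 ≤ L) (a b : α) : 0 ≤ cappedChainDist ε L a b :=
  le_csInf (Set.insert_nonempty _ _)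
    (by rintro s (rfl | hs); exacts [hL, nonneg_of_mem_chainLengths hs])

theorem cappedChainDist_self (hL : 0 ≤ L) (a : α) : cappedChainDist ε L a a = 0 :=
  (cappedChainDist_le_of_mem hL (zero_mem_chainLengths a)).antisymm (cappedChainDist_nonneg hL a a)

theorem le_cappedChainDist {a b : α} (h : ∀ s ∈ chainLengths ε a b, L ≤ s) :
    L ≤ cappedChainDist ε L a b :=
  le_csInf (Set.insert_nonempty _ _) (by rintro s (rfl | hs); exacts [le_rfl, h s hs])

theorem cappedChainDist_le_dist_add (hL : 0 ≤ L) {a b : α} (hab : dist a b < ε) (c : α) :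
    cappedChainDist ε L a c ≤ dist a b + cappedChainDist ε L b c := by
  have h : ∀ s ∈ insert L (chainLengths ε b c), cappedChainDist ε L a c - dist a b ≤ s := by
    rintro s (rfl | hs)
    · linarith [cappedChainDist_le (ε := ε) hL a c, dist_nonneg (x := a) (y := b)]
    · linarith [cappedChainDist_le_of_mem hL (dist_add_mem_chainLengths hab hs)]
  have : cappedChainDist ε L a c - dist a b ≤ cappedChainDist ε L b c :=
    le_csInf (Set.insert_nonempty _ _) h
  linarith

end Chains

section DeltaCondition

variable {α : Type*} [MetricSpace α] {ε : ℝ}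

theorem not_localDeltaCondition_of_forall_le {x y : α} {η : ℝ} (hε : 0 < ε) (hη : 0 < η)
    (h : ∀ s ∈ chainLengths ε x y, dist x y + η ≤ s) : ¬ LocalDeltaCondition x y := by
  set L := dist x y + η
  have hL : 0 < L := by positivity
  set θ := ε / (L + ε)
  have hθ0 : 0 < θ := by positivity
  have hθ1 : θ < 1 := (div_lt_one (by positivity)).2 (by linarith)
  have hθL : θ * L < ε := by
    rw [div_mul_eq_mul_div, div_lt_iff₀ (by positivity)]
    nlinarith
  set F := fun z => θ * cappedChainDist ε L z y
  have hlocal (u v : α) (huv : dist u v < ε) : F u ≤ F v + θ * dist u v := by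
    have := cappedChainDist_le_dist_add hL.le huv y
    simp only [F]
    nlinarith
  have hlip : LipschitzWith 1 F := LipschitzWith.of_le_add fun u v => by
    by_cases huv : dist u v < ε
    · nlinarith [hlocal u v huv, dist_nonneg (x := u) (y := v)]
    · have := cappedChainDist_le (ε := ε) hL.le u y
      have := cappedChainDist_nonneg (ε := ε) hL.le v y
      simp only [F]
      nlinarith
  have hFxy : F x - F y > θ * dist x y := by
    have := le_cappedChainDist h
    simp only [F, cappedChainDist_self hL.le]
    nlinarith
  intro hΔ
  obtain ⟨u, v, -, huv, hgt⟩ := hΔ F hlip θ hθ0 hθ1 hFxy ε hε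
  linarith [hlocal u v huv]

theorem localDeltaCondition_iff_chainLengths {x y : α} :
    LocalDeltaCondition x y ↔
      ∀ ε > 0, ∀ η > 0, ∃ s ∈ chainLengths ε x y, s < dist x y + η := by
  refine ⟨fun hΔ ε hε η hη => ?_, fun hC f hf θ hθ0 hθ1 hfxy ε hε => ?_⟩
  · by_contra! h
    exact not_localDeltaCondition_of_forall_le hε hη h hΔ
  obtain ⟨s, ⟨n, p, rfl, rfl, hstep, rfl⟩, hs⟩ :=
    hC ε hε ((f x - f y) / θ - dist x y) (by rw [gt_iff_lt, sub_pos, lt_div_iff₀ hθ0]; linarith)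
  have hsum : ∑ i ∈ Finset.range n, θ * dist (p i) (p (i + 1)) <
      ∑ i ∈ Finset.range n, (f (p i) - f (p (i + 1))) := by
    rw [← Finset.mul_sum, Finset.sum_range_sub', ← lt_div_iff₀' hθ0]
    linarith
  obtain ⟨i, hi, hlt⟩ := Finset.exists_lt_of_sum_lt hsum
  have hfi : f (p i) - f (p (i + 1)) ≤ dist (p i) (p (i + 1)) := by
    simpa using (le_abs_self _).trans (hf.dist_le_mul (p i) (p (i + 1)))
  refine ⟨p i, p (i + 1), ?_, hstep i (Finset.mem_range.1 hi), hlt⟩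
  nlinarith

end DeltaCondition

theorem tendsto_of_le_of_le_add {ι : Type*} {l : Filter ι} {u v U V W : ι → ℝ} {a b : ℝ}
    (hu : ∀ i, u i ≤ U i) (hv : ∀ i, v i ≤ V i) (huv : ∀ i, W i ≤ u i + v i)
    (hU : Tendsto U l (𝓝 a)) (hV : Tendsto V l (𝓝 b)) (hW : Tendsto W l (𝓝 (a + b))) :
    Tendsto u l (𝓝 a) :=
  tendsto_of_tendsto_of_tendsto_of_le_of_le (by simpa using hW.sub hV) hU
    (fun i => by linarith [hv i, huv i]) hu

section Normed

variable {X : Type*} [NormedAddCommGroup X] [NormedSpace ℝ X]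

/-- Splitting off `±s • (p n - q n)` with `s = min t (1 - t)` writes the convex combination as the
midpoint of two sequences whose norms also tend to `1`. -/
theorem MLUR.tendsto_norm_sub (hX : MLUR X) {p q : ℕ → X} {w : X} {t : ℝ} (ht0 : 0 < t)
    (ht1 : t < 1) (hp : Tendsto (fun n => ‖p n‖) atTop (𝓝 1))
    (hq : Tendsto (fun n => ‖q n‖) atTop (𝓝 1))
    (hw : Tendsto (fun n => t • p n + (1 - t) • q n) atTop (𝓝 w)) (hw1 : ‖w‖ = 1) :
    Tendsto (fun n => ‖p n - q n‖) atTop (𝓝 0) := by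
  set s := min t (1 - t)
  have hs0 : 0 < s := lt_min ht0 (sub_pos.2 ht1)
  have hst : s ≤ t := min_le_left _ _
  have hs1 : s ≤ 1 - t := min_le_right _ _
  have hcomb {α β : ℝ} (hα : 0 ≤ α) (hβ : 0 ≤ β) (hαβ : α + β = 1) :
      (∀ n, ‖α • p n + β • q n‖ ≤ α * ‖p n‖ + β * ‖q n‖) ∧
        Tendsto (fun n => α * ‖p n‖ + β * ‖q n‖) atTop (𝓝 1) := by
    refine ⟨fun n => (norm_add_le _ _).trans_eq ?_, ?_⟩
    · rw [norm_smul_of_nonneg hα, norm_smul_of_nonneg hβ]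
    · simpa [hαβ] using (hp.const_mul α).add (hq.const_mul β)
  obtain ⟨ha, hA⟩ := hcomb (α := t + s) (β := 1 - t - s) (by linarith) (by linarith) (by ring)
  obtain ⟨hb, hB⟩ := hcomb (α := t - s) (β := 1 - t + s) (by linarith) (by linarith) (by ring)
  set a := fun n => (t + s) • p n + (1 - t - s) • q n
  set b := fun n => (t - s) • p n + (1 - t + s) • q n
  have hmid : ∀ n, (1 / 2 : ℝ) • (a n + b n) = t • p n + (1 - t) • q n := fun n => by
    simp only [a, b]
    module
  have hsum : Tendsto (fun n => ‖a n + b n‖) atTop (𝓝 (1 + 1)) := by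
    have h2w : ‖(2 : ℝ) • w‖ = 1 + 1 := by
      rw [norm_smul, hw1]
      norm_num
    rw [← h2w]
    refine (hw.const_smul (2 : ℝ)).norm.congr fun n => ?_
    rw [← hmid, smul_smul]
    norm_num
  have hdiff : Tendsto (fun n => ‖a n - b n‖) atTop (𝓝 0) :=
    hX a b w (tendsto_of_le_of_le_add ha hb (fun n => norm_add_le _ _) hA hB hsum)
      (tendsto_of_le_of_le_add hb ha (fun n => (norm_add_le _ _).trans_eq (by rw [add_comm]))
        hB hA (by simpa only [add_comm] using hsum))
      (by simpa only [hmid] using hw) hw1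
  have hab : ∀ n, ‖p n - q n‖ = (2 * s)⁻¹ * ‖a n - b n‖ := fun n => by
    have : a n - b n = (2 * s) • (p n - q n) := by
      simp only [a, b]
      module
    rw [this, norm_smul, Real.norm_of_nonneg (by positivity), inv_mul_cancel_left₀ (by positivity)]
  simpa [hab] using hdiff.const_mul (2 * s)⁻¹

theorem MLUR.tendsto_of_tendsto_norm_sub (hX : MLUR X) {x y : X} (hxy : x ≠ y) {t : ℝ}
    (ht0 : 0 < t) (ht1 : t < 1) {z : ℕ → X}
    (hzx : Tendsto (fun n => ‖z n - x‖) atTop (𝓝 (t * ‖x - y‖)))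
    (hzy : Tendsto (fun n => ‖z n - y‖) atTop (𝓝 ((1 - t) * ‖x - y‖))) :
    Tendsto z atTop (𝓝 ((1 - t) • x + t • y)) := by
  set d := ‖x - y‖
  have hd : 0 < d := norm_sub_pos_iff.2 hxy
  have ht1' : 0 < 1 - t := sub_pos.2 ht1
  set p := fun n => (t * d)⁻¹ • (z n - x)
  set q := fun n => ((1 - t) * d)⁻¹ • (y - z n)
  have hp : Tendsto (fun n => ‖p n‖) atTop (𝓝 1) := by
    have := hzx.const_mul (t * d)⁻¹
    rw [inv_mul_cancel₀ (by positivity)] at this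
    refine this.congr fun n => ?_
    rw [norm_smul, Real.norm_of_nonneg (by positivity)]
  have hq : Tendsto (fun n => ‖q n‖) atTop (𝓝 1) := by
    have := hzy.const_mul ((1 - t) * d)⁻¹
    rw [inv_mul_cancel₀ (by positivity)] at this
    refine this.congr fun n => ?_
    rw [norm_smul, Real.norm_of_nonneg (by positivity), norm_sub_rev]
  have hw : ∀ n, t • p n + (1 - t) • q n = d⁻¹ • (y - x) := fun n => by
    simp only [p, q]
    match_scalars
    all_goals field_simp
    all_goals ring
  have hw1 : ‖d⁻¹ • (y - x)‖ = 1 := by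
    rw [norm_smul, norm_sub_rev, Real.norm_of_nonneg (by positivity), inv_mul_cancel₀ hd.ne']
  have hpq := hX.tendsto_norm_sub ht0 ht1 hp hq (tendsto_const_nhds.congr fun n => (hw n).symm) hw1
  have hz : ∀ n, z n - ((1 - t) • x + t • y) = (t * (1 - t) * d) • (p n - q n) := fun n => by
    simp only [p, q]
    match_scalars
    all_goals field_simp
    all_goals ring
  rw [tendsto_iff_norm_sub_tendsto_zero]
  simpa [hz, norm_smul, abs_of_pos ht0, abs_of_pos ht1', abs_of_pos hd] using
    hpq.const_mul (t * (1 - t) * d)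

theorem MLUR.segment_subset_of_forall_exists_near (hX : MLUR X) {M : Set X} (hM : IsClosed M)
    {x y : X} (hx : x ∈ M) (hy : y ∈ M)
    (h : ∀ r : ℝ, 0 < r → r < ‖x - y‖ → ∀ ε : ℝ, 0 < ε →
      ∃ z ∈ M, ‖z - x‖ ≤ r + ε ∧ ‖z - y‖ ≤ ‖x - y‖ - r + ε) :
    ∀ t : ℝ, 0 ≤ t → t ≤ 1 → (1 - t) • x + t • y ∈ M := by
  intro t ht0 ht1
  rcases eq_or_ne x y with rfl | hxy
  · rwa [← add_smul, sub_add_cancel, one_smul]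
  rcases ht0.eq_or_lt with rfl | ht0
  · simpa using hx
  rcases ht1.eq_or_lt with rfl | ht1
  · simpa using hy
  set d := ‖x - y‖
  have hd : 0 < d := norm_sub_pos_iff.2 hxy
  choose z hzM hzx hzy using fun n : ℕ =>
    h (t * d) (by positivity) (by nlinarith) (1 / (n + 1)) Nat.one_div_pos_of_nat
  have he : Tendsto (fun n : ℕ => 1 / ((n : ℝ) + 1)) atTop (𝓝 0) :=
    tendsto_one_div_add_atTop_nhds_zero_nat
  have hU : Tendsto (fun n : ℕ => t * d + 1 / (n + 1)) atTop (𝓝 (t * d)) := by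
    simpa using tendsto_const_nhds.add he
  have hV : Tendsto (fun n : ℕ => d - t * d + 1 / (n + 1)) atTop (𝓝 ((1 - t) * d)) := by
    convert tendsto_const_nhds.add he using 2
    ring
  have htri : ∀ n, d ≤ ‖z n - x‖ + ‖z n - y‖ := fun n => by
    rw [norm_sub_rev (z n) x]
    exact norm_sub_le_norm_sub_add_norm_sub _ _ _
  have hd_eq : t * d + (1 - t) * d = d := by ring
  refine hM.mem_of_tendsto (hX.tendsto_of_tendsto_norm_sub hxy ht0 ht1 ?_ ?_)
    (Eventually.of_forall hzM)
  · exact tendsto_of_le_of_le_add hzx hzy htri hU hV (by rw [hd_eq]; exact tendsto_const_nhds)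
  · exact tendsto_of_le_of_le_add hzy hzx (fun n => (htri n).trans_eq (add_comm _ _)) hV hU
      (by rw [add_comm, hd_eq]; exact tendsto_const_nhds)

theorem exists_mem_chainLengths_le_dist_of_segment_subset {M : Set X} {x y : X} (hx : x ∈ M)
    (hy : y ∈ M) (h : ∀ t : ℝ, 0 ≤ t → t ≤ 1 → (1 - t) • x + t • y ∈ M) {ε : ℝ} (hε : 0 < ε) :
    ∃ s ∈ chainLengths ε (⟨x, hx⟩ : M) ⟨y, hy⟩, s ≤ dist x y := by
  have hmem (t : Set.Icc (0 : ℝ) 1) : AffineMap.lineMap x y (t : ℝ) ∈ M := by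
    rw [AffineMap.lineMap_apply_module]
    exact h t t.2.1 t.2.2
  have hγ := ((lipschitzWith_lineMap x y).comp (LipschitzWith.projIcc zero_le_one)).subtype_mk
    (p := (· ∈ M)) fun t => hmem _
  rw [mul_one] at hγ
  exact exists_mem_chainLengths_le_dist hγ (by ext; simp) (by ext; simp) hε

end Normed

theorem forall_exists_near_of_chainLengths {X : Type*} [NormedAddCommGroup X] {M : Set X}
    {x y : X} (hx : x ∈ M) (hy : y ∈ M)
    (h : ∀ ε > 0, ∀ η > 0, ∃ s ∈ chainLengths ε (⟨x, hx⟩ : M) ⟨y, hy⟩, s < dist x y + η) :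
    ∀ r : ℝ, 0 < r → r < ‖x - y‖ → ∀ ε : ℝ, 0 < ε →
      ∃ z ∈ M, ‖z - x‖ ≤ r + ε ∧ ‖z - y‖ ≤ ‖x - y‖ - r + ε := by
  intro r hr hrd ε hε
  obtain ⟨s, hs, hsd⟩ := h ε hε ε hε
  obtain ⟨z, hzx, hzy⟩ :=
    exists_dist_lt_of_mem_chainLengths hr (by rw [Subtype.dist_eq, dist_eq_norm]; exact hrd.le) hs
  rw [Subtype.dist_eq, dist_eq_norm] at hzx hzy
  rw [dist_eq_norm] at hsd
  exact ⟨z, z.2, hzx.le, by linarith⟩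

theorem delta_point_iff_segment_mlur_general {X : Type*} [NormedAddCommGroup X]
    [NormedSpace ℝ X] (hmlur : MLUR X)
    (M : Set X) (hM : IsComplete M)
    (x y : X) (hx : x ∈ M) (hy : y ∈ M) :
    (LocalDeltaCondition (⟨x, hx⟩ : M) (⟨y, hy⟩ : M) ↔
      (∀ r : ℝ, 0 < r → r < ‖x - y‖ → ∀ ε : ℝ, 0 < ε →
        ∃ z ∈ M, ‖z - x‖ ≤ r + ε ∧ ‖z - y‖ ≤ ‖x - y‖ - r + ε)) ∧
    ((∀ r : ℝ, 0 < r → r < ‖x - y‖ → ∀ ε : ℝ, 0 < ε →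
        ∃ z ∈ M, ‖z - x‖ ≤ r + ε ∧ ‖z - y‖ ≤ ‖x - y‖ - r + ε) ↔
      (∀ t : ℝ, 0 ≤ t → t ≤ 1 → (1 - t) • x + t • y ∈ M)) := by
  have hΔ := localDeltaCondition_iff_chainLengths (x := (⟨x, hx⟩ : M)) (y := ⟨y, hy⟩)
  have h23 := hmlur.segment_subset_of_forall_exists_near hM.isClosed hx hy
  have h3C (h3 : ∀ t : ℝ, 0 ≤ t → t ≤ 1 → (1 - t) • x + t • y ∈ M) :
      ∀ ε > 0, ∀ η > 0, ∃ s ∈ chainLengths ε (⟨x, hx⟩ : M) ⟨y, hy⟩, s < dist x y + η :=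
    fun ε hε η hη =>
      let ⟨s, hs, hsd⟩ := exists_mem_chainLengths_le_dist_of_segment_subset hx hy h3 hε
      ⟨s, hs, by linarith⟩
  have hC2 := forall_exists_near_of_chainLengths hx hy
  exact ⟨⟨fun h1 => hC2 (hΔ.1 h1), fun h2 => hΔ.2 (h3C (h23 h2))⟩,
    h23, fun h3 => hC2 (h3C h3)⟩

/-- For a complete subset `M` of an MLUR Banach space and `x ≠ y` in `M`:
`m_{x,y}` is a Δ-point iff all enlarged intermediate balls meet `M` iff `[x,y] ⊆ M`. -/
theorem delta_point_iff_segment_mlur {X : Type*} [NormedAddCommGroup X]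
    [NormedSpace ℝ X] [CompleteSpace X] (hmlur : MLUR X)
    (M : Set X) (hM : IsComplete M)
    (x y : X) (hx : x ∈ M) (hy : y ∈ M) (hxy : x ≠ y) :
    (LocalDeltaCondition (⟨x, hx⟩ : M) (⟨y, hy⟩ : M) ↔
      (∀ r : ℝ, 0 < r → r < ‖x - y‖ → ∀ ε : ℝ, 0 < ε →
        ∃ z ∈ M, ‖z - x‖ ≤ r + ε ∧ ‖z - y‖ ≤ ‖x - y‖ - r + ε)) ∧
    ((∀ r : ℝ, 0 < r → r < ‖x - y‖ → ∀ ε : ℝ, 0 < ε →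
        ∃ z ∈ M, ‖z - x‖ ≤ r + ε ∧ ‖z - y‖ ≤ ‖x - y‖ - r + ε) ↔
      (∀ t : ℝ, 0 ≤ t → t ≤ 1 → (1 - t) • x + t • y ∈ M)) :=
  delta_point_iff_segment_mlur_general hmlur M hM x y hx hy
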